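/- arXiv:2512.21266 — 3 statements merged into one kernel-verified Lean document; each statement's English description precedes it below -/
import Mathlib

section
/- Let f : ℝⁿ → ℝ be a homogeneous polynomial of degree d ≥ 1 and v ∈ ℝⁿ with v ∈ K°(f,v). Then for every x ∈ K°(f,v) there exists a continuous path γ : [0,1] → ℝⁿ with γ(0) = x, γ(1) = v, and f(γ(t)) > 0 for all t ∈ [0,1]. In particular, K°(f,v) is contained in the connected component of {y ∈ ℝⁿ : f(y) ≠ 0} that contains v. -/
open Set

/-- Directional derivative `D_v f (x) = ⟨∇f(x), v⟩ = fderiv ℝ f x v`. -/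
noncomputable def dirDeriv {n : ℕ} (v : Fin n → ℝ) (f : (Fin n → ℝ) → ℝ) :
    (Fin n → ℝ) → ℝ := fun x => fderiv ℝ f x v

/-- The open cone `K°(f,v) = {x : f(x) > 0, D_v f(x) > 0, …, D_v^{d-1} f(x) > 0}`. -/
def Kcirc {n : ℕ} (d : ℕ) (f : (Fin n → ℝ) → ℝ) (v : Fin n → ℝ) : Set (Fin n → ℝ) :=
  {x | ∀ k < d, 0 < (dirDeriv v)^[k] f x}

/-! Along the line `s ↦ x + s • v`, the function `s ↦ D_v^k f (x + s • v)` has derivative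
`D_v^(k+1) f (x + s • v)`. Each `D_v^k f` is homogeneous of degree `d - k`, so `D_v^d f` is
homogeneous of degree `0` and continuous at `0`, hence constant; by Euler's identity the constant is
`D_v^(d-1) f v > 0`. Descending from `k = d`, every `D_v^k f (x + s • v)` with `x ∈ K°(f,v)` is
nondecreasing in `s ≥ 0` and positive at `s = 0`, so `f > 0` on the ray `x + s • v`, `s ≥ 0`.
The segment from `x` to `v` is a positive rescaling of that ray. -/

open Filter Topology
open scoped ContDiff

section

variable {E : Type*} [NormedAddCommGroup E] [NormedSpace ℝ E]

def IsPosHomogeneous (m : ℕ) (g : E → ℝ) : Prop :=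
  ∀ c : ℝ, 0 < c → ∀ x, g (c • x) = c ^ m * g x

namespace IsPosHomogeneous

variable {m : ℕ} {g : E → ℝ}

theorem fderiv_apply (hg : IsPosHomogeneous (m + 1) g) (v : E) :
    IsPosHomogeneous m (fun x => fderiv ℝ g x v) := by
  intro c hc x
  have hscale : (fun y => g (c • y)) = c ^ (m + 1) • g := funext fun y => by simp [hg c hc y]
  have hv := DFunLike.congr_fun (congrFun (congrArg (fderiv ℝ) hscale) x) v
  rw [fderiv_comp_smul, fderiv_const_smul_field] at hv
  simp only [smul_apply, Pi.smul_apply, smul_eq_mul, pow_succ] at hv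
  exact mul_left_cancel₀ hc.ne' (by linarith)

theorem eq_apply_zero (hg : IsPosHomogeneous 0 g) (hcont : ContinuousAt g 0) (x : E) :
    g x = g 0 := by
  have hlim : Tendsto (fun c : ℝ => g (c • x)) (𝓝[>] 0) (𝓝 (g 0)) := by
    refine hcont.tendsto.comp ?_
    simpa using ((tendsto_nhdsWithin_of_tendsto_nhds tendsto_id).smul_const x :
      Tendsto (fun c : ℝ => c • x) (𝓝[>] 0) (𝓝 ((0 : ℝ) • x)))
  have hconst : (fun _ : ℝ => g x) =ᶠ[𝓝[>] 0] fun c => g (c • x) :=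
    eventually_mem_nhdsWithin.mono fun c hc => by simpa using (hg c hc x).symm
  exact tendsto_nhds_unique (tendsto_const_nhds.congr' hconst) hlim

theorem fderiv_apply_self (hg : IsPosHomogeneous m g) {x : E} (hx : DifferentiableAt ℝ g x) :
    fderiv ℝ g x x = m * g x := by
  have hray : HasDerivAt (fun c : ℝ => g (c • x)) (fderiv ℝ g x x) 1 := by
    have hline : HasDerivAt (fun c : ℝ => c • x) x 1 := by
      simpa using (hasDerivAt_id' (1 : ℝ)).smul_const x
    exact hx.hasFDerivAt.comp_hasDerivAt_of_eq 1 hline (one_smul ℝ x).symm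
  have hpow : HasDerivAt (fun c : ℝ => c ^ m * g x) (m * g x) 1 := by
    simpa using (hasDerivAt_pow m (1 : ℝ)).mul_const (g x)
  have heq : (fun c : ℝ => g (c • x)) =ᶠ[𝓝 1] fun c => c ^ m * g x :=
    (lt_mem_nhds one_pos).mono fun c hc => hg c hc x
  exact hray.unique (hpow.congr_of_eventuallyEq heq)

end IsPosHomogeneous

theorem hasDerivAt_comp_add_smul {g : E → ℝ} (hg : Differentiable ℝ g) (x v : E) (s : ℝ) :
    HasDerivAt (fun s : ℝ => g (x + s • v)) (fderiv ℝ g (x + s • v) v) s := by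
  have hline : HasDerivAt (fun s : ℝ => x + s • v) v s := by
    simpa using ((hasDerivAt_id' s).smul_const v).const_add x
  exact (hg _).hasFDerivAt.comp_hasDerivAt s hline

end

section DirDeriv

variable {n d : ℕ} {v : Fin n → ℝ} {f : (Fin n → ℝ) → ℝ}

theorem contDiff_iterate_dirDeriv (hf : ContDiff ℝ ∞ f) (k : ℕ) :
    ContDiff ℝ ∞ ((dirDeriv v)^[k] f) := by
  induction k with
  | zero => exact hf
  | succ k ih =>
    rw [Function.iterate_succ_apply']
    exact (ih.fderiv_right le_rfl).clm_apply contDiff_const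

theorem IsPosHomogeneous.iterate_dirDeriv (hhom : IsPosHomogeneous d f) :
    ∀ k ≤ d, IsPosHomogeneous (d - k) ((dirDeriv v)^[k] f) := by
  intro k hk
  induction k with
  | zero => exact hhom
  | succ k ih =>
    rw [Function.iterate_succ_apply']
    have hpred := ih (by omega)
    rw [show d - k = d - (k + 1) + 1 by omega] at hpred
    exact hpred.fderiv_apply v

theorem IsPosHomogeneous.iterate_dirDeriv_succ_eq (hhom : IsPosHomogeneous (d + 1) f)
    (hf : ContDiff ℝ ∞ f) (x : Fin n → ℝ) :
    (dirDeriv v)^[d + 1] f x = (dirDeriv v)^[d] f v := by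
  have hconst : IsPosHomogeneous 0 ((dirDeriv v)^[d + 1] f) := by
    simpa using hhom.iterate_dirDeriv (d + 1) le_rfl
  have hlin : IsPosHomogeneous 1 ((dirDeriv v)^[d] f) := by
    simpa using hhom.iterate_dirDeriv d (Nat.le_succ d)
  have hcont := (contDiff_iterate_dirDeriv (v := v) hf (d + 1)).continuous.continuousAt (x := 0)
  have hdiff := (contDiff_iterate_dirDeriv (v := v) hf d).differentiable (by simp)
  calc (dirDeriv v)^[d + 1] f x
      = (dirDeriv v)^[d + 1] f v := (hconst.eq_apply_zero hcont x).trans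
        (hconst.eq_apply_zero hcont v).symm
    _ = (dirDeriv v)^[d] f v := by
      rw [Function.iterate_succ_apply', dirDeriv, hlin.fderiv_apply_self (hdiff v)]
      simp

theorem iterate_dirDeriv_pos_add_smul (hf : ContDiff ℝ ∞ f)
    (htop : ∀ y, 0 < (dirDeriv v)^[d] f y) {x : Fin n → ℝ}
    (hx : ∀ k < d, 0 < (dirDeriv v)^[k] f x) {k : ℕ} (hk : k ≤ d) {s : ℝ} (hs : 0 ≤ s) :
    0 < (dirDeriv v)^[k] f (x + s • v) := by
  induction hk using Nat.decreasingInduction generalizing s with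
  | self => exact htop _
  | of_succ k hk ih =>
    have hderiv (t : ℝ) : HasDerivAt (fun t : ℝ => (dirDeriv v)^[k] f (x + t • v))
        ((dirDeriv v)^[k + 1] f (x + t • v)) t := by
      rw [Function.iterate_succ_apply']
      exact hasDerivAt_comp_add_smul
        ((contDiff_iterate_dirDeriv hf k).differentiable (by simp)) x v t
    have hmono : MonotoneOn (fun t : ℝ => (dirDeriv v)^[k] f (x + t • v)) (Ici 0) :=
      monotoneOn_of_deriv_nonneg (convex_Ici 0)
        (fun t _ => (hderiv t).continuousAt.continuousWithinAt)
        (fun t _ => (hderiv t).differentiableAt.differentiableWithinAt)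
        (fun t ht => (hderiv t).deriv ▸ (ih (interior_subset ht : (0 : ℝ) ≤ t)).le)
    calc 0 < (dirDeriv v)^[k] f (x + (0 : ℝ) • v) := by simpa using hx k hk
      _ ≤ _ := hmono self_mem_Ici hs hs

theorem pos_add_smul_of_mem_Kcirc (hf : ContDiff ℝ ∞ f) (hhom : IsPosHomogeneous (d + 1) f)
    (hv : v ∈ Kcirc (d + 1) f v) {x : Fin n → ℝ} (hx : x ∈ Kcirc (d + 1) f v) {s : ℝ}
    (hs : 0 ≤ s) : 0 < f (x + s • v) := by
  have htop (y : Fin n → ℝ) : 0 < (dirDeriv v)^[d + 1] f y :=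
    hhom.iterate_dirDeriv_succ_eq hf y ▸ hv d d.lt_succ_self
  exact iterate_dirDeriv_pos_add_smul hf htop hx (Nat.zero_le _) hs

theorem pos_segment_of_mem_Kcirc (hf : ContDiff ℝ ∞ f) (hhom : IsPosHomogeneous (d + 1) f)
    (hv : v ∈ Kcirc (d + 1) f v) {x : Fin n → ℝ} (hx : x ∈ Kcirc (d + 1) f v) {t : ℝ}
    (ht : t ∈ Icc (0 : ℝ) 1) : 0 < f ((1 - t) • x + t • v) := by
  rcases ht.2.eq_or_lt with rfl | ht1
  · simpa using hv 0 d.succ_pos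
  · have hc : 0 < 1 - t := sub_pos.2 ht1
    have hfactor : (1 - t) • x + t • v = (1 - t) • (x + (t / (1 - t)) • v) := by
      rw [smul_add, smul_smul, mul_div_cancel₀ _ hc.ne']
    rw [hfactor, hhom _ hc]
    exact mul_pos (pow_pos hc _) (pos_add_smul_of_mem_Kcirc hf hhom hv hx (div_nonneg ht.1 hc.le))

end DirDeriv

/-- Let `f` be a homogeneous polynomial of degree `d ≥ 1` and
`v ∈ K°(f,v)`. Then every `x ∈ K°(f,v)` is joined to `v` by a continuous path
along which `f` stays strictly positive; in particular `K°(f,v)` is contained in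
the connected component of `{y : f(y) ≠ 0}` containing `v`. -/
theorem stmt3 (n d : ℕ) (hd : 1 ≤ d) (f : (Fin n → ℝ) → ℝ)
    (hpoly : ∃ p : MvPolynomial (Fin n) ℝ, ∀ x, f x = MvPolynomial.eval x p)
    (hhom : ∀ c : ℝ, 0 < c → ∀ x, f (c • x) = c ^ d * f x)
    (v : Fin n → ℝ) (hv : v ∈ Kcirc d f v) :
    (∀ x ∈ Kcirc d f v, ∃ γ : ℝ → (Fin n → ℝ),
      ContinuousOn γ (Icc (0 : ℝ) 1) ∧ γ 0 = x ∧ γ 1 = v ∧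
      ∀ t ∈ Icc (0 : ℝ) 1, 0 < f (γ t)) ∧
    Kcirc d f v ⊆ connectedComponentIn {y | f y ≠ 0} v := by
  obtain ⟨d, rfl⟩ : ∃ k, d = k + 1 := ⟨d - 1, by omega⟩
  obtain ⟨p, hp⟩ := hpoly
  have hf : ContDiff ℝ ∞ f := by
    rw [show f = fun x => MvPolynomial.eval x p from funext hp]
    exact (AnalyticOnNhd.eval_mvPolynomial p).contDiff
  have hpath (x : Fin n → ℝ) (hx : x ∈ Kcirc (d + 1) f v) : ∃ γ : ℝ → (Fin n → ℝ),
      ContinuousOn γ (Icc (0 : ℝ) 1) ∧ γ 0 = x ∧ γ 1 = v ∧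
      ∀ t ∈ Icc (0 : ℝ) 1, 0 < f (γ t) :=
    ⟨fun t => (1 - t) • x + t • v, by fun_prop, by simp, by simp,
      fun t ht => pos_segment_of_mem_Kcirc hf hhom hv hx ht⟩
  refine ⟨hpath, fun x hx => ?_⟩
  obtain ⟨γ, hγ, hγ0, hγ1, hγpos⟩ := hpath x hx
  refine (isPreconnected_Icc.image γ hγ).subset_connectedComponentIn
    ⟨1, right_mem_Icc.2 zero_le_one, hγ1⟩ ?_ ⟨0, left_mem_Icc.2 zero_le_one, hγ0⟩
  rintro _ ⟨t, ht, rfl⟩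
  exact (hγpos t ht).ne'
end

section
/- Let K ⊆ ℝⁿ be a proper convex cone, let f be a homogeneous polynomial of degree d ≥ 1 that is K-completely log-concave (equivalently K-Lorentzian), and let v ∈ int K satisfy v ∈ K°(f,v). Then the interior of the closed cone K(f,v) = {x ∈ ℝⁿ : f(x) ≥ 0, D_v f(x) ≥ 0, …, D_v^{d−1} f(x) ≥ 0} equals K°(f,v) = {x ∈ ℝⁿ : f(x) > 0, D_v f(x) > 0, …, D_v^{d−1} f(x) > 0}. -/
open Set

/-- The closed cone `K(f,v) = {x : f(x) ≥ 0, D_v f(x) ≥ 0, …, D_v^{d-1} f(x) ≥ 0}`. -/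
def Kclosed {n : ℕ} (d : ℕ) (f : (Fin n → ℝ) → ℝ) (v : Fin n → ℝ) : Set (Fin n → ℝ) :=
  {x | ∀ k < d, 0 ≤ (dirDeriv v)^[k] f x}

section Aux
open MvPolynomial


noncomputable def gradCLM {n : ℕ} (p : MvPolynomial (Fin n) ℝ) (x : Fin n → ℝ) :
    (Fin n → ℝ) →L[ℝ] ℝ :=
  ∑ i, MvPolynomial.eval x (MvPolynomial.pderiv i p) •
    (ContinuousLinearMap.proj i : ((Fin n → ℝ)) →L[ℝ] ℝ)

noncomputable def Dv {n : ℕ} (v : Fin n → ℝ) (p : MvPolynomial (Fin n) ℝ) :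
    MvPolynomial (Fin n) ℝ :=
  ∑ i, MvPolynomial.C (v i) * MvPolynomial.pderiv i p

lemma eval_hasFDerivAt {n : ℕ} (p : MvPolynomial (Fin n) ℝ) (x : Fin n → ℝ) :
    HasFDerivAt (fun y => MvPolynomial.eval y p) (gradCLM p x) x := by
  induction p using MvPolynomial.induction_on with
  | C a =>
      have h1 : (fun y : Fin n → ℝ => MvPolynomial.eval y (MvPolynomial.C a)) = fun _ => a := by
        funext y; simp
      have h2 : gradCLM (MvPolynomial.C a : MvPolynomial (Fin n) ℝ) x = 0 := by
        simp [gradCLM]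
      rw [h1, h2]; exact hasFDerivAt_const a x
  | add p q hp hq =>
      have h1 : (fun y : Fin n → ℝ => MvPolynomial.eval y (p + q)) =
          fun y => MvPolynomial.eval y p + MvPolynomial.eval y q := by funext y; simp
      have h2 : gradCLM (p + q) x = gradCLM p x + gradCLM q x := by
        simp [gradCLM, add_smul, Finset.sum_add_distrib]
      rw [h1, h2]; exact hp.add hq
  | mul_X p i hp =>
      have h0 : HasFDerivAt (fun y : Fin n → ℝ => y i)
          (ContinuousLinearMap.proj i : ((Fin n → ℝ)) →L[ℝ] ℝ) x :=
        (ContinuousLinearMap.proj i : ((Fin n → ℝ)) →L[ℝ] ℝ).hasFDerivAt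
      have h := hp.mul h0
      have h1 : (fun y : Fin n → ℝ => MvPolynomial.eval y (p * MvPolynomial.X i)) =
          fun y => MvPolynomial.eval y p * y i := by funext y; simp
      have h2 : gradCLM (p * MvPolynomial.X i) x =
          MvPolynomial.eval x p • (ContinuousLinearMap.proj i : ((Fin n → ℝ)) →L[ℝ] ℝ)
            + x i • gradCLM p x := by
        classical
        have e1 : ∀ j : Fin n, MvPolynomial.eval x (MvPolynomial.pderiv j (p * MvPolynomial.X i))
            = MvPolynomial.eval x (MvPolynomial.pderiv j p) * x i
              + (if j = i then MvPolynomial.eval x p else 0) := by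
          intro j
          rw [pderiv_mul]
          simp [pderiv_X, Pi.single_apply, eq_comm, apply_ite (MvPolynomial.eval x)]
        simp only [gradCLM, e1, add_smul, Finset.sum_add_distrib]
        rw [add_comm]
        congr 1
        · rw [Finset.sum_eq_single i]
          · simp
          · intro j _ hj; simp [hj]
          · simp
        · rw [Finset.smul_sum]
          apply Finset.sum_congr rfl
          intro j _
          rw [mul_comm, ← smul_eq_mul, smul_assoc]
      rw [h1, h2]; exact h

lemma eval_differentiable {n : ℕ} (p : MvPolynomial (Fin n) ℝ) :
    Differentiable ℝ (fun y => MvPolynomial.eval y p) :=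
  fun x => (eval_hasFDerivAt p x).differentiableAt

lemma dirDeriv_eval' {n : ℕ} (v : Fin n → ℝ) (p : MvPolynomial (Fin n) ℝ) :
    (fun x => fderiv ℝ (fun y => MvPolynomial.eval y p) x v) =
      fun x => MvPolynomial.eval x (Dv v p) := by
  funext x
  rw [(eval_hasFDerivAt p x).fderiv]
  simp only [gradCLM, Dv, ContinuousLinearMap.coe_sum', Finset.sum_apply,
    ContinuousLinearMap.smul_apply, ContinuousLinearMap.proj_apply, map_sum, map_mul, eval_C]
  exact Finset.sum_congr rfl fun i _ => by simp [smul_eq_mul, mul_comm]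

lemma dirDeriv_eval {n : ℕ} (v : Fin n → ℝ) (p : MvPolynomial (Fin n) ℝ) :
    dirDeriv v (fun y => MvPolynomial.eval y p) = fun x => MvPolynomial.eval x (Dv v p) :=
  dirDeriv_eval' v p

lemma iter_dirDeriv {n : ℕ} (v : Fin n → ℝ) (k : ℕ) :
    ∀ p : MvPolynomial (Fin n) ℝ,
      (dirDeriv v)^[k] (fun y => MvPolynomial.eval y p)
        = fun x => MvPolynomial.eval x ((Dv v)^[k] p) := by
  induction k with
  | zero => intro p; simp
  | succ k ih =>
      intro p
      rw [Function.iterate_succ_apply, dirDeriv_eval, ih, Function.iterate_succ_apply]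

end Aux

/-- For a proper convex cone `K`, a `K`-completely log-concave
homogeneous polynomial `f` of degree `d ≥ 1`, and `v ∈ int K` with `v ∈ K°(f,v)`,
the interior of `K(f,v)` equals `K°(f,v)`. -/
theorem stmt5 (n d : ℕ) (hd : 1 ≤ d) (K : Set (Fin n → ℝ))
    (hKclosed : IsClosed K) (hKconv : Convex ℝ K)
    (hKcone : ∀ x ∈ K, ∀ c : ℝ, 0 ≤ c → c • x ∈ K)
    (hKint : (interior K).Nonempty)
    (hKpointed : ∀ x ∈ K, -x ∈ K → x = 0)
    (f : (Fin n → ℝ) → ℝ)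
    (hpoly : ∃ p : MvPolynomial (Fin n) ℝ, ∀ x, f x = MvPolynomial.eval x p)
    (hhom : ∀ c : ℝ, 0 < c → ∀ x, f (c • x) = c ^ d * f x)
    (hCLC : ∀ m : ℕ, m ≤ d → ∀ a : Fin m → (Fin n → ℝ), (∀ i, a i ∈ K) →
      (∀ x ∈ interior K, 0 < List.foldr dirDeriv f (List.ofFn a) x) ∧
      ConcaveOn ℝ (interior K)
        (fun x => Real.log (List.foldr dirDeriv f (List.ofFn a) x)))
    (v : Fin n → ℝ) (hvK : v ∈ interior K) (hv : v ∈ Kcirc d f v) :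
    interior (Kclosed d f v) = Kcirc d f v := by
  classical
  obtain ⟨p, hp⟩ := hpoly
  have hf : f = fun y => MvPolynomial.eval y p := funext hp
  subst hf
  obtain ⟨m, rfl⟩ : ∃ m, d = m + 1 := ⟨d - 1, (Nat.succ_pred_eq_of_pos hd).symm⟩
  set F : (Fin n → ℝ) → ℝ := fun y => MvPolynomial.eval y p with hF
  set g : ℕ → (Fin n → ℝ) → ℝ := fun k => (dirDeriv v)^[k] F with hgdef
  have hg : ∀ k, g k = fun x => MvPolynomial.eval x ((Dv v)^[k] p) := fun k => iter_dirDeriv v k p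
  have hdiff : ∀ k, Differentiable ℝ (g k) := fun k => by rw [hg]; exact eval_differentiable _
  have hcont : ∀ k, Continuous (g k) := fun k => (hdiff k).continuous
  have hsucc : ∀ k z, g (k+1) z = fderiv ℝ (g k) z v := by
    intro k z
    have h1 : g (k+1) = dirDeriv v (g k) := Function.iterate_succ_apply' (dirDeriv v) k F
    rw [h1]; rfl
  have hv' : ∀ k < m + 1, 0 < g k v := hv
  have hApos0 : 0 < g m v := hv' m (Nat.lt_succ_self m)
  have hline : ∀ (k : ℕ) (y w : Fin n → ℝ) (t : ℝ),
      HasDerivAt (fun s : ℝ => g k (y + s • w)) (fderiv ℝ (g k) (y + t • w) w) t := by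
    intro k y w t
    have h1 : HasDerivAt (fun s : ℝ => y + s • w) w t := by
      simpa using ((hasDerivAt_id t).smul_const w).const_add y
    exact (hdiff k (y + t • w)).hasFDerivAt.comp_hasDerivAt t h1
  have hhomk : ∀ (k : ℕ) (c : ℝ), 0 < c → ∀ x, g k (c • x) = c ^ (m+1) * (c⁻¹) ^ k * g k x := by
    intro k
    induction k with
    | zero =>
        intro c hc x
        show F (c • x) = c ^ (m+1) * (c⁻¹) ^ 0 * F x
        simpa using hhom c hc x
    | succ k ih =>
        intro c hc x
        have hc0 : c ≠ 0 := ne_of_gt hc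
        have hinner : HasFDerivAt (fun y : Fin n → ℝ => c • y)
            (c • ContinuousLinearMap.id ℝ (Fin n → ℝ)) x := by
          simpa using (c • ContinuousLinearMap.id ℝ (Fin n → ℝ)).hasFDerivAt (x := x)
        have hA : HasFDerivAt (fun y => g k (c • y))
            ((fderiv ℝ (g k) (c • x)).comp (c • ContinuousLinearMap.id ℝ (Fin n → ℝ))) x :=
          ((hdiff k (c • x)).hasFDerivAt).comp x hinner
        have hB : (fun y => g k (c • y)) = fun y => (c ^ (m+1) * c⁻¹ ^ k) * g k y :=
          funext fun y => ih c hc y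
        have hC : HasFDerivAt (fun y => (c ^ (m+1) * c⁻¹ ^ k) * g k y)
            ((c ^ (m+1) * c⁻¹ ^ k) • fderiv ℝ (g k) x) x :=
          ((hdiff k x).hasFDerivAt).const_mul _
        have hU := (hB ▸ hA).unique hC
        have hUv := congrArg (fun L : (Fin n → ℝ) →L[ℝ] ℝ => L v) hU
        simp only [ContinuousLinearMap.comp_apply, ContinuousLinearMap.smul_apply,
          ContinuousLinearMap.coe_smul', Pi.smul_apply, ContinuousLinearMap.coe_id', id_eq,
          map_smul, smul_eq_mul] at hUv
        rw [← hsucc, ← hsucc] at hUv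
        have hrw : g (k+1) (c • x) = c⁻¹ * (c * g (k+1) (c • x)) := by field_simp
        rw [hrw, hUv, pow_succ]
        ring
  have hgtop : ∀ x, g (m+1) x = g m v := by
    have hconst0 : ∀ x, g (m+1) x = g (m+1) 0 := by
      intro x
      have hmap : Filter.Tendsto (fun c : ℝ => c • x) (nhdsWithin 0 (Set.Ioi 0)) (nhds 0) := by
        have h1 : Filter.Tendsto (fun c : ℝ => c • x) (nhds 0) (nhds ((0:ℝ) • x)) :=
          (continuous_id.smul continuous_const).tendsto 0
        simpa using h1.mono_left nhdsWithin_le_nhds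
      have h1 : Filter.Tendsto (fun c : ℝ => g (m+1) (c • x)) (nhdsWithin 0 (Set.Ioi 0))
          (nhds (g (m+1) 0)) := ((hcont (m+1)).tendsto 0).comp hmap
      have h2 : Filter.Tendsto (fun c : ℝ => g (m+1) (c • x)) (nhdsWithin 0 (Set.Ioi 0))
          (nhds (g (m+1) x)) := by
        apply Filter.Tendsto.congr' _ tendsto_const_nhds
        filter_upwards [self_mem_nhdsWithin] with c hc
        have hc' : (0:ℝ) < c := hc
        rw [hhomk (m+1) c hc' x, ← mul_pow, mul_inv_cancel₀ (ne_of_gt hc'), one_pow, one_mul]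
      exact tendsto_nhds_unique h2 h1
    have hd1 := hline m 0 v 1
    simp only [zero_add, one_smul] at hd1
    rw [← hsucc m v, hconst0 v] at hd1
    have heq : (fun t : ℝ => g m (t • v)) =ᶠ[nhds (1:ℝ)] fun t => t * g m v := by
      filter_upwards [isOpen_Ioi.mem_nhds (by norm_num : (0:ℝ) < 1)] with t ht
      have ht' : (0:ℝ) < t := ht
      have ht0 : t ≠ 0 := ne_of_gt ht'
      rw [hhomk m t ht' v]
      field_simp
      ring_nf; rw [mul_assoc, ← mul_pow, mul_inv_cancel₀ ht0, one_pow, mul_one]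
    have hd2 : HasDerivAt (fun t : ℝ => t * g m v) (g m v) 1 := by
      simpa using (hasDerivAt_id (1:ℝ)).mul_const (g m v)
    have hd1' := hd2.congr_of_eventuallyEq heq
    have := hd1'.unique hd1
    intro x
    rw [hconst0 x, ← this]
  apply Subset.antisymm
  · intro x hx
    have hxcl : ∀ k < m + 1, 0 ≤ g k x := interior_subset hx
    rw [mem_interior_iff_mem_nhds, Metric.mem_nhds_iff] at hx
    obtain ⟨r, hr, hball⟩ := hx
    have hv1 : (0:ℝ) < ‖v‖ + 1 := by positivity
    set ε : ℝ := r / (2 * (‖v‖ + 1)) with hεdef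
    have hεpos : 0 < ε := by positivity
    have hεv : ε * (‖v‖ + 1) = r / 2 := by
      rw [hεdef]; field_simp
    have hseg : ∀ s : ℝ, 0 ≤ s → s ≤ ε → (∀ k < m + 1, 0 ≤ g k (x - s • v)) := by
      intro s h0 h1
      refine hball ?_
      rw [Metric.mem_ball, dist_eq_norm]
      have hnorm : ‖x - s • v - x‖ = s * ‖v‖ := by
        have : x - s • v - x = -(s • v) := by abel
        rw [this, norm_neg, norm_smul, Real.norm_eq_abs, abs_of_nonneg h0]
      rw [hnorm]
      have h2 : s * ‖v‖ ≤ ε * ‖v‖ :=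
        mul_le_mul_of_nonneg_right h1 (norm_nonneg v)
      nlinarith [norm_nonneg v]
    have key : ∀ j k, k + j = m + 1 → 0 < g k x := by
      intro j
      induction j with
      | zero =>
          intro k hk
          have hkeq : k = m + 1 := by omega
          subst hkeq
          rw [hgtop x]; exact hApos0
      | succ j ih =>
          intro k hk
          have hk1 : 0 < g (k+1) x := ih (k+1) (by omega)
          have hkd : k < m + 1 := by omega
          have hχc : Continuous fun s : ℝ => g (k+1) (x - s • v) :=
            (hcont (k+1)).comp (continuous_const.sub (continuous_id.smul continuous_const))
          have hev : ∀ᶠ s : ℝ in nhds (0:ℝ), 0 < g (k+1) (x - s • v) := by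
            have h1 := hχc.tendsto 0
            simp only [zero_smul, sub_zero] at h1
            exact h1.eventually (eventually_gt_nhds hk1)
          obtain ⟨δ, hδpos, hδ⟩ := Metric.eventually_nhds_iff.mp hev
          set δ' : ℝ := min (δ / 2) ε with hδ'def
          have hδ'pos : 0 < δ' := lt_min (by linarith) hεpos
          have hδ'ε : δ' ≤ ε := min_le_right _ _
          have hδ'δ : δ' < δ := lt_of_le_of_lt (min_le_left _ _) (by linarith)
          have hanti : StrictAntiOn (fun s : ℝ => g k (x - s • v)) (Icc 0 δ') := by
            apply strictAntiOn_of_deriv_neg (convex_Icc 0 δ')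
            · exact ((hcont k).comp (continuous_const.sub (continuous_id.smul continuous_const))).continuousOn
            · intro s hs
              rw [interior_Icc] at hs
              have hds : HasDerivAt (fun s : ℝ => g k (x - s • v)) (-(g (k+1) (x - s • v))) s := by
                have h2 := hline k x (-v) s
                simp only [smul_neg, ← sub_eq_add_neg] at h2
                rw [ContinuousLinearMap.map_neg, ← hsucc] at h2
                exact h2
              rw [hds.deriv]
              have h3 : 0 < g (k+1) (x - s • v) := by
                apply hδ
                rw [Real.dist_eq, sub_zero, abs_of_pos hs.1]
                exact lt_trans hs.2 hδ'δ
              linarith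
          have h2 := hanti (show (0:ℝ) ∈ Icc 0 δ' from ⟨le_refl 0, hδ'pos.le⟩)
            (show δ' ∈ Icc 0 δ' from ⟨hδ'pos.le, le_refl δ'⟩) hδ'pos
          have h3 : 0 ≤ g k (x - δ' • v) := hseg δ' hδ'pos.le hδ'ε k hkd
          simp only [zero_smul, sub_zero] at h2
          linarith
    exact fun k hk => key (m + 1 - k) k (by omega)
  · apply interior_maximal
    · exact fun x hx k hk => (hx k hk).le
    · have hKeq : Kcirc (m+1) F v = ⋂ k ∈ Finset.range (m+1), {x | 0 < g k x} := by
        ext x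
        simp only [Kcirc, mem_setOf_eq, mem_iInter, Finset.mem_range]
        exact Iff.rfl
      rw [hKeq]
      exact isOpen_biInter_finset fun k _ => isOpen_lt continuous_const (hcont k)
end

section
/- Let K ⊆ ℝⁿ be a proper convex cone and A ∈ ℝ^{n×n}, and let Q = (A + Aᵀ)/2 be the symmetric matrix of the quadratic form q(x) = xᵀAx. If q is K-Lorentzian, i.e., Q has exactly one positive eigenvalue and yᵀQx > 0 for all x, y ∈ int K, then A is K-copositive and Lyapunov semi-stable on K. If moreover q is strictly K-Lorentzian, in the sense that additionally xᵀQx > 0 for all x ∈ K \ {0}, then A is strictly K-copositive and Lyapunov positive stable on K. -/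
open Set Matrix

/-- Condition (a): `inf{xᵀPx/‖x‖² : x ∈ K, x ≠ 0} > 0` (Euclidean norm). -/
def lyapCondA {n : ℕ} (K : Set (Fin n → ℝ)) (P : Matrix (Fin n) (Fin n) ℝ) : Prop :=
  ∃ c > (0 : ℝ), ∀ x ∈ K, c * (∑ i, x i ^ 2) ≤ x ⬝ᵥ P.mulVec x

/-- Condition (c): `(I − (P + Pᵀ))x ∈ K` for every boundary point `x` of `K`. -/
def lyapCondC {n : ℕ} (K : Set (Fin n → ℝ)) (P : Matrix (Fin n) (Fin n) ℝ) : Prop :=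
  ∀ x ∈ frontier K, ((1 : Matrix (Fin n) (Fin n) ℝ) - (P + Pᵀ)).mulVec x ∈ K

/-- `A` is Lyapunov semi-stable on `K`. -/
def LyapunovSemiStable {n : ℕ} (K : Set (Fin n → ℝ))
    (A : Matrix (Fin n) (Fin n) ℝ) : Prop :=
  ∃ P : Matrix (Fin n) (Fin n) ℝ, lyapCondA K P ∧
    (∀ x ∈ K, 0 ≤ A.mulVec x ⬝ᵥ (P + Pᵀ).mulVec x) ∧ lyapCondC K P

/-- `A` is Lyapunov positive stable on `K`. -/
def LyapunovPositiveStable {n : ℕ} (K : Set (Fin n → ℝ))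
    (A : Matrix (Fin n) (Fin n) ℝ) : Prop :=
  ∃ P : Matrix (Fin n) (Fin n) ℝ, lyapCondA K P ∧
    (∀ x ∈ K, x ≠ 0 → 0 < A.mulVec x ⬝ᵥ (P + Pᵀ).mulVec x) ∧ lyapCondC K P


open Set Matrix Filter Topology

lemma quad_eq {n : ℕ} (A Q : Matrix (Fin n) (Fin n) ℝ)
    (hQdef : Q = (2⁻¹ : ℝ) • (A + Aᵀ)) (x : Fin n → ℝ) :
    x ⬝ᵥ Q.mulVec x = x ⬝ᵥ A.mulVec x := by
  subst hQdef
  have h : x ⬝ᵥ Aᵀ.mulVec x = x ⬝ᵥ A.mulVec x := by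
    rw [Matrix.dotProduct_mulVec, Matrix.vecMul_transpose, dotProduct_comm]
  rw [Matrix.smul_mulVec, Matrix.add_mulVec, dotProduct_smul, dotProduct_add, h]
  simp [smul_eq_mul]; ring

lemma quad_cont {n : ℕ} (Q : Matrix (Fin n) (Fin n) ℝ) :
    Continuous fun x : Fin n → ℝ => x ⬝ᵥ Q.mulVec x := by
  have : (fun x : Fin n → ℝ => x ⬝ᵥ Q.mulVec x)
      = fun x => ∑ i, x i * ∑ j, Q i j * x j := by
    funext x; simp [dotProduct, Matrix.mulVec]
  rw [this]
  fun_prop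

lemma cop_of_int {n : ℕ} (K : Set (Fin n → ℝ)) (hKconv : Convex ℝ K)
    (hKint : (interior K).Nonempty) (Q : Matrix (Fin n) (Fin n) ℝ)
    (hpos : ∀ x ∈ interior K, ∀ y ∈ interior K, 0 < y ⬝ᵥ Q.mulVec x) :
    ∀ x ∈ K, 0 ≤ x ⬝ᵥ Q.mulVec x := by
  obtain ⟨x₀, hx₀⟩ := hKint
  intro x hx
  set g : ℕ → (Fin n → ℝ) := fun k => (((k : ℝ) + 1)⁻¹) • x₀ + (1 - ((k : ℝ) + 1)⁻¹) • x with hg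
  have hmem : ∀ k, g k ∈ interior K := by
    intro k
    have h1 : (0 : ℝ) < ((k : ℝ) + 1)⁻¹ := by positivity
    have h2 : ((k : ℝ) + 1)⁻¹ ≤ 1 := by
      rw [inv_le_one_iff₀]; right; linarith [Nat.cast_nonneg (α := ℝ) k]
    exact hKconv.combo_interior_closure_mem_interior hx₀ (subset_closure hx) h1
      (by linarith) (by ring)
  have htend : Tendsto g atTop (𝓝 x) := by
    have h0 : Tendsto (fun k : ℕ => ((k : ℝ) + 1)⁻¹) atTop (𝓝 0) := by
      simpa using tendsto_one_div_add_atTop_nhds_zero_nat (𝕜 := ℝ)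
    have h1 : Tendsto (fun k : ℕ => (1 - ((k : ℝ) + 1)⁻¹)) atTop (𝓝 1) := by
      simpa using (tendsto_const_nhds (x := (1:ℝ))).sub h0
    have h2 := (h0.smul_const x₀).add (h1.smul_const x)
    simpa using h2
  have hfx : Tendsto (fun k => (g k) ⬝ᵥ Q.mulVec (g k)) atTop (𝓝 (x ⬝ᵥ Q.mulVec x)) :=
    ((quad_cont Q).tendsto x).comp htend
  exact le_of_tendsto_of_tendsto' tendsto_const_nhds hfx
    (fun k => (hpos _ (hmem k) _ (hmem k)).le)

/-- Let `K` be a proper convex cone, `A ∈ ℝ^{n×n}`, and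
`Q = (A + Aᵀ)/2` the symmetric matrix of `q(x) = xᵀAx`. If `q` is
`K`-Lorentzian (`Q` has exactly one positive eigenvalue and `yᵀQx > 0` for all
`x, y ∈ int K`), then `A` is `K`-copositive and Lyapunov semi-stable on `K`;
if moreover `xᵀQx > 0` for all `x ∈ K \ {0}` (strictly `K`-Lorentzian), then
`A` is strictly `K`-copositive and Lyapunov positive stable on `K`. -/
theorem stmt17 (n : ℕ) (K : Set (Fin n → ℝ))
    (hKclosed : IsClosed K) (hKconv : Convex ℝ K)
    (hKcone : ∀ x ∈ K, ∀ c : ℝ, 0 ≤ c → c • x ∈ K)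
    (hKint : (interior K).Nonempty)
    (hKpointed : ∀ x ∈ K, -x ∈ K → x = 0)
    (A Q : Matrix (Fin n) (Fin n) ℝ)
    (hQdef : Q = (2⁻¹ : ℝ) • (A + Aᵀ))
    (hQ : Q.IsHermitian)
    (honepos : (Finset.univ.filter fun i => 0 < hQ.eigenvalues i).card = 1)
    (hpos : ∀ x ∈ interior K, ∀ y ∈ interior K, 0 < y ⬝ᵥ Q.mulVec x) :
    (∀ x ∈ K, 0 ≤ x ⬝ᵥ A.mulVec x) ∧
    LyapunovSemiStable K A ∧
    ((∀ x ∈ K, x ≠ 0 → 0 < x ⬝ᵥ Q.mulVec x) →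
      (∀ x ∈ K, x ≠ 0 → 0 < x ⬝ᵥ A.mulVec x) ∧ LyapunovPositiveStable K A) := by
  have hcop : ∀ x ∈ K, 0 ≤ x ⬝ᵥ A.mulVec x := fun x hx => by
    rw [← quad_eq A Q hQdef]; exact cop_of_int K hKconv hKint Q hpos x hx
  -- P = (1/2) • 1
  set P : Matrix (Fin n) (Fin n) ℝ := (2⁻¹ : ℝ) • 1 with hP
  have hPsum : P + Pᵀ = 1 := by
    rw [hP, Matrix.transpose_smul, Matrix.transpose_one, ← add_smul]
    norm_num
  have hA : lyapCondA K P := by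
    refine ⟨2⁻¹, by norm_num, fun x _ => ?_⟩
    rw [hP, Matrix.smul_mulVec, Matrix.one_mulVec, dotProduct_smul]
    simp [dotProduct, sq, smul_eq_mul]
  have hC : lyapCondC K P := by
    intro x _
    rw [hPsum, sub_self, Matrix.zero_mulVec]
    obtain ⟨x₀, hx₀⟩ := hKint
    simpa using hKcone x₀ (interior_subset hx₀) 0 le_rfl
  have key : ∀ x : Fin n → ℝ, A.mulVec x ⬝ᵥ (P + Pᵀ).mulVec x = x ⬝ᵥ A.mulVec x := by
    intro x
    rw [hPsum, Matrix.one_mulVec, dotProduct_comm]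
  refine ⟨hcop, ⟨P, hA, fun x hx => by rw [key]; exact hcop x hx, hC⟩, fun hstr => ?_⟩
  have hstr' : ∀ x ∈ K, x ≠ 0 → 0 < x ⬝ᵥ A.mulVec x := fun x hx hx0 => by
    rw [← quad_eq A Q hQdef]; exact hstr x hx hx0
  exact ⟨hstr', P, hA, fun x hx hx0 => by rw [key]; exact hstr' x hx hx0, hC⟩
end
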